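/- In any uncountable standard Borel space X there exist disjoint co-analytic sets A₀, A₁ ⊆ X that are Borel-inseparable: there is no Borel set B ⊆ X with A₀ ⊆ B and A₁ ⊆ X \ B. -/

import Mathlib

/-!
Work in Baire space `ℕ → ℕ`, which is Borel isomorphic to `X`. A point `y` codes, for each
`b : Bool` and each `x`, a tree `codedTree y x b`, and for any two analytic sets `B true`,
`B false` a single `y` makes `codedTree y x b` have a branch exactly when `x ∈ B b`.

Compare trees by homomorphisms of their child relations. A homomorphism carries branches to
branches, and any two trees are comparable: a tree with a branch receives every tree, and between
well-founded trees the one whose root has smaller rank maps into the other, child by child. The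
existence of a homomorphism between `T_b(y) = codedTree y y b` and `T_c(y)` is the projection of
a closed condition on `y` and the map, so `A₀ = {y | T_false(y) ↛ T_true(y)}` and
`A₁ = {y | T_true(y) ↛ T_false(y)}` are disjoint and co-analytic. If a Borel set `B` separated
them, take `y` coding `B` and `Bᶜ`: for `y ∈ B` the tree `T_true(y)` has a branch and
`T_false(y)` has none, so `y ∈ A₁ ⊆ Bᶜ`; symmetrically `y ∉ B` forces `y ∈ A₀ ⊆ B`.
-/

open Set Filter Topology MeasureTheory Descriptive

section LocallyConstant

variable {X : Type*} [TopologicalSpace X]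

theorem IsLocallyConstant.bind {α β : Type*} {f : X → α} (hf : IsLocallyConstant f)
    {g : α → X → β} (hg : ∀ a, IsLocallyConstant (g a)) :
    IsLocallyConstant fun x => g (f x) x := by
  refine (IsLocallyConstant.iff_eventually_eq _).2 fun x => ?_
  filter_upwards [hf.eventually_eq x, (hg (f x)).eventually_eq x] with y hfy hgy
  rw [hfy, hgy]

theorem IsLocallyConstant.forall_mem {ι : Type*} {I : Set ι} (hI : I.Finite)
    {p : ι → X → Prop} (hp : ∀ i ∈ I, IsLocallyConstant (p i)) :
    IsLocallyConstant fun x => ∀ i ∈ I, p i x := by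
  refine (IsLocallyConstant.iff_eventually_eq _).2 fun x => ?_
  filter_upwards [(eventually_all_finite hI).2 fun i hi => (hp i hi).eventually_eq x] with y hy
  exact propext (forall₂_congr fun i hi => (hy i hi).to_iff)

theorem IsLocallyConstant.isClosed_setOf {p : X → Prop} (hp : IsLocallyConstant p) :
    IsClosed {x | p x} := by
  simpa using hp.isClosed_fiber True

end LocallyConstant

theorem IsWellFounded.lt_rank_iff {α : Type*} {r : α → α → Prop} [IsWellFounded α r] {a : α}
    {o : Ordinal} : o < rank r a ↔ ∃ b, r b a ∧ o ≤ rank r b := by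
  refine ⟨fun h => ?_, fun ⟨b, hb, h⟩ => h.trans_lt (rank_lt_of_rel hb)⟩
  rw [rank_eq, Ordinal.lt_iSup_iff] at h
  obtain ⟨⟨b, hb⟩, h⟩ := h
  exact ⟨b, hb, Order.lt_succ_iff.1 h⟩

namespace MeasureTheory

theorem AnalyticSet.exists_isClosed_eq_image_fst {α : Type*} [TopologicalSpace α] [T2Space α]
    {s : Set α} (hs : AnalyticSet s) :
    ∃ F : Set (α × (ℕ → ℕ)), IsClosed F ∧ s = Prod.fst '' F := by
  rw [AnalyticSet] at hs
  rcases hs with rfl | ⟨f, hf, rfl⟩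
  · exact ⟨∅, isClosed_empty, by simp⟩
  · refine ⟨{p | f p.2 = p.1}, isClosed_eq (hf.comp continuous_snd) continuous_fst, ?_⟩
    ext x
    simp [eq_comm]

theorem AnalyticSet.image_of_measurable {α β : Type*} [TopologicalSpace α] [MeasurableSpace α]
    [BorelSpace α] [TopologicalSpace β] [SecondCountableTopology β]
    [MeasurableSpace β] [OpensMeasurableSpace β] {s : Set α} (hs : AnalyticSet s) {f : α → β}
    (hf : Measurable f) : AnalyticSet (f '' s) := by
  rw [AnalyticSet] at hs
  rcases hs with rfl | ⟨g, hg, rfl⟩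
  · simpa using analyticSet_empty
  · rw [← range_comp, ← image_univ]
    exact MeasurableSet.univ.analyticSet_image (hf.comp hg.measurable)

end MeasureTheory

namespace Descriptive

variable {A : Type*}

def pref (x : ℕ → A) (n : ℕ) : List A := List.ofFn fun i : Fin n => x i

@[simp] theorem length_pref (x : ℕ → A) (n : ℕ) : (pref x n).length = n := List.length_ofFn

theorem pref_succ (x : ℕ → A) (n : ℕ) : pref x (n + 1) = pref x n ++ [x n] := by
  rw [pref, List.ofFn_succ_last]; rfl

theorem pref_eq_pref_iff {x y : ℕ → A} {n : ℕ} : pref x n = pref y n ↔ ∀ i < n, x i = y i := by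
  simp [pref, List.ofFn_inj, funext_iff, Fin.forall_iff]

theorem take_pref (x : ℕ → A) {m n : ℕ} (h : m ≤ n) : (pref x n).take m = pref x m := by
  apply List.ext_getElem <;> simp [pref, h]

theorem tendsto_of_pref_eq [TopologicalSpace A] {u : ℕ → ℕ → A} {x : ℕ → A}
    (h : ∀ n, pref (u n) n = pref x n) : Tendsto u atTop (𝓝 x) :=
  tendsto_pi_nhds.2 fun i => tendsto_const_nhds.congr' <|
    (eventually_gt_atTop i).mono fun n hn => (pref_eq_pref_iff.1 (h n) i hn).symm

theorem _root_.IsClosed.mem_of_forall_pref [TopologicalSpace A] {B : Type*} [TopologicalSpace B]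
    {F : Set ((ℕ → A) × (ℕ → B))} (hF : IsClosed F) {x : ℕ → A} {z : ℕ → B}
    (h : ∀ n, ∃ w ∈ F, pref w.1 n = pref x n ∧ pref w.2 n = pref z n) : (x, z) ∈ F := by
  choose w hwF hw₁ hw₂ using h
  exact hF.mem_of_tendsto ((tendsto_of_pref_eq hw₁).prodMk_nhds (tendsto_of_pref_eq hw₂))
    (Eventually.of_forall hwF)

theorem isLocallyConstant_pref [TopologicalSpace A] [DiscreteTopology A] (n : ℕ) :
    IsLocallyConstant fun x : ℕ → A => pref x n := by
  have : Continuous fun (x : ℕ → A) (i : Fin n) => x i := by fun_prop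
  exact ((IsLocallyConstant.iff_continuous _).2 this).comp List.ofFn

end Descriptive

namespace Descriptive.Tree

variable {A : Type*} {S T : tree A}

def HasBranch (T : tree A) : Prop := ∃ x : ℕ → A, ∀ n, pref x n ∈ T

def Child (T : tree A) (t s : List A) : Prop := t ∈ T ∧ ∃ a, t = s ++ [a]

theorem acc_child_of_acc_nil (h : Acc (Child T) []) (s : List A) : Acc (Child T) s := by
  induction s using List.reverseRecOn with
  | nil => exact h
  | append_singleton s a ih =>
    by_cases hs : s ++ [a] ∈ T
    · exact ih.inv ⟨hs, a, rfl⟩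
    · exact ⟨_, fun t ⟨ht, b, htb⟩ => absurd (mem_of_append (htb ▸ ht)) hs⟩

theorem not_hasBranch_iff_wellFounded : ¬HasBranch T ↔ WellFounded (Child T) := by
  refine ⟨fun h => ⟨acc_child_of_acc_nil (by_contra fun hacc => h ?_)⟩, ?_⟩
  · obtain ⟨c, hc₀, hc⟩ := not_acc_iff_exists_descending_chain.1 hacc
    choose hmem a ha using hc
    have hca : ∀ n, c n = pref a n := fun n => by
      induction n with
      | zero => simpa [pref] using hc₀
      | succ n ih => rw [ha, ih, pref_succ]
    exact ⟨a, fun n => mem_of_append (y := [a n]) (by rw [← pref_succ, ← hca]; exact hmem n)⟩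
  · rintro hwf ⟨x, hx⟩
    exact not_acc_iff_exists_descending_chain.2
      ⟨pref x, rfl, fun n => ⟨hx _, x n, pref_succ x n⟩⟩ (hwf.apply _)

theorem hasBranch_of_relHom (f : Child S →r Child T) (hS : HasBranch S) : HasBranch T := by
  by_contra hT
  exact not_hasBranch_iff_wellFounded.2 (RelHomClass.wellFounded f
    (not_hasBranch_iff_wellFounded.1 hT)) hS

theorem nonempty_relHom_of_hasBranch (hT : HasBranch T) (S : tree A) :
    Nonempty (Child S →r Child T) := by
  obtain ⟨x, hx⟩ := hT
  refine ⟨⟨fun s => pref x s.length, ?_⟩⟩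
  rintro _ s ⟨-, a, rfl⟩
  exact ⟨hx _, x s.length, by simp [pref_succ]⟩

section RankHom

variable (S T) [IsWellFounded (List A) (Child S)] [IsWellFounded (List A) (Child T)]

open IsWellFounded

noncomputable def rankHom (s : List A) : List A :=
  s.reverseRecOn [] fun s a t =>
    Classical.epsilon fun t' => Child T t' t ∧ rank (Child S) (s ++ [a]) ≤ rank (Child T) t'

variable {S T}

theorem rankHom_append_singleton {s : List A} {a : A} (hs : s ++ [a] ∈ S)
    (h : rank (Child S) s ≤ rank (Child T) (rankHom S T s)) :
    Child T (rankHom S T (s ++ [a])) (rankHom S T s) ∧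
      rank (Child S) (s ++ [a]) ≤ rank (Child T) (rankHom S T (s ++ [a])) := by
  rw [rankHom, List.reverseRecOn_concat]
  exact Classical.epsilon_spec (lt_rank_iff.1 ((rank_lt_of_rel ⟨hs, a, rfl⟩).trans_le h))

theorem rank_le_rank_rankHom (h : rank (Child S) [] ≤ rank (Child T) []) :
    ∀ s ∈ S, rank (Child S) s ≤ rank (Child T) (rankHom S T s) := by
  intro s
  induction s using List.reverseRecOn with
  | nil => intro; simpa [rankHom] using h
  | append_singleton s a ih =>
    exact fun hs => (rankHom_append_singleton hs (ih (mem_of_append hs))).2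

theorem nonempty_relHom_of_rank_le (h : rank (Child S) [] ≤ rank (Child T) []) :
    Nonempty (Child S →r Child T) := by
  refine ⟨⟨rankHom S T, ?_⟩⟩
  rintro _ s ⟨hs, a, rfl⟩
  exact (rankHom_append_singleton hs (rank_le_rank_rankHom h s (mem_of_append hs))).1

end RankHom

theorem nonempty_relHom_or_nonempty_relHom (S T : tree A) :
    Nonempty (Child S →r Child T) ∨ Nonempty (Child T →r Child S) := by
  by_cases hT : HasBranch T
  · exact .inl (nonempty_relHom_of_hasBranch hT S)
  by_cases hS : HasBranch S
  · exact .inr (nonempty_relHom_of_hasBranch hS T)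
  have : IsWellFounded (List A) (Child S) := ⟨not_hasBranch_iff_wellFounded.1 hS⟩
  have : IsWellFounded (List A) (Child T) := ⟨not_hasBranch_iff_wellFounded.1 hT⟩
  exact (le_total _ _).imp nonempty_relHom_of_rank_le nonempty_relHom_of_rank_le

end Descriptive.Tree

namespace BorelInseparable

open Descriptive Tree Encodable

def codedTree (y x : ℕ → ℕ) (b : Bool) : tree ℕ :=
  ⟨{s : List ℕ | ∀ n ≤ s.length, y (encode (b, pref x n, s.take n)) = 0}, fun s a h n hn => by
    simpa [List.take_append_of_le_length hn] using h n (by simp; omega)⟩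

theorem mem_codedTree {y x : ℕ → ℕ} {b : Bool} {s : List ℕ} :
    s ∈ codedTree y x b ↔ ∀ n ≤ s.length, y (encode (b, pref x n, s.take n)) = 0 :=
  Iff.rfl

theorem hasBranch_codedTree_iff {y x : ℕ → ℕ} {b : Bool} :
    HasBranch (codedTree y x b) ↔ ∃ z : ℕ → ℕ, ∀ n, y (encode (b, pref x n, pref z n)) = 0 := by
  simp only [HasBranch, mem_codedTree, length_pref]
  refine exists_congr fun z => ⟨fun h n => ?_, fun h m n hn => ?_⟩
  · simpa [take_pref] using h n n le_rfl
  · rw [take_pref z hn]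
    exact h n

theorem exists_hasBranch_codedTree_iff {B : Bool → Set (ℕ → ℕ)} (hB : ∀ b, AnalyticSet (B b)) :
    ∃ y, ∀ x b, HasBranch (codedTree y x b) ↔ x ∈ B b := by
  classical
  choose F hF hBF using fun b => (hB b).exists_isClosed_eq_image_fst
  let P : Set (Bool × List ℕ × List ℕ) :=
    {q | ∃ w ∈ F q.1, pref w.1 q.2.2.length = q.2.1 ∧ pref w.2 q.2.2.length = q.2.2}
  refine ⟨fun n => if n ∈ encode '' P then 0 else 1, fun x b => ?_⟩
  simp only [hasBranch_codedTree_iff, encode_injective.mem_set_image, ite_eq_left_iff,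
    one_ne_zero, imp_false, not_not, hBF b]
  constructor
  · rintro ⟨z, hz⟩
    exact ⟨(x, z), (hF b).mem_of_forall_pref fun n => by simpa [P] using hz n, rfl⟩
  · rintro ⟨⟨x, z⟩, hxz, rfl⟩
    exact ⟨z, fun n => ⟨(x, z), hxz, by simp⟩⟩

theorem isLocallyConstant_mem_codedTree (b : Bool) (s : List ℕ) :
    IsLocallyConstant fun y => s ∈ codedTree y y b := by
  refine IsLocallyConstant.forall_mem (finite_Iic s.length) fun n _ =>
    (isLocallyConstant_pref n).bind (g := fun u y => y (encode (b, u, s.take n)) = 0) fun u =>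
      ((IsLocallyConstant.iff_continuous _).2 (continuous_apply _)).comp (· = 0)

theorem isLocallyConstant_child_codedTree (b : Bool) (s t : List ℕ) :
    IsLocallyConstant fun y => Child (codedTree y y b) t s :=
  (isLocallyConstant_mem_codedTree b t).comp (· ∧ ∃ a, t = s ++ [a])

def nonHomSet (b c : Bool) : Set (ℕ → ℕ) :=
  {y | IsEmpty (Child (codedTree y y b) →r Child (codedTree y y c))}

theorem analyticSet_compl_nonHomSet (b c : Bool) : AnalyticSet (nonHomSet b c)ᶜ := by
  have : PolishSpace (List ℕ → List ℕ) := {}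
  let C : Set ((ℕ → ℕ) × (List ℕ → List ℕ)) :=
    {p | ∀ s t, Child (codedTree p.1 p.1 b) t s → Child (codedTree p.1 p.1 c) (p.2 t) (p.2 s)}
  have hC : IsClosed C := by
    simp only [C, ofPred_forall]
    refine isClosed_iInter fun s => isClosed_iInter fun t => IsLocallyConstant.isClosed_setOf ?_
    have himage : IsLocallyConstant fun p : (ℕ → ℕ) × (List ℕ → List ℕ) => (p.2 s, p.2 t) :=
      (IsLocallyConstant.iff_continuous _).2 (by fun_prop)
    exact ((isLocallyConstant_child_codedTree b s t).comp_continuous continuous_fst).comp₂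
      (himage.bind fun q => (isLocallyConstant_child_codedTree c q.1 q.2).comp_continuous
        continuous_fst) (· → ·)
  convert hC.analyticSet.image_of_continuous continuous_fst
  ext y
  simp only [nonHomSet, mem_compl_iff, mem_ofPred_eq, not_isEmpty_iff]
  exact ⟨fun ⟨f⟩ => ⟨(y, f), fun s t => f.map_rel, rfl⟩,
    fun ⟨⟨_, f⟩, hf, hy⟩ => hy ▸ ⟨⟨f, hf _ _⟩⟩⟩

theorem disjoint_nonHomSet (b c : Bool) : Disjoint (nonHomSet b c) (nonHomSet c b) := by
  refine disjoint_left.2 fun y hbc hcb => ?_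
  rcases nonempty_relHom_or_nonempty_relHom (codedTree y y b) (codedTree y y c) with h | h
  exacts [not_nonempty_iff.2 hbc h, not_nonempty_iff.2 hcb h]

theorem not_measurablySeparable_nonHomSet :
    ¬∃ B, MeasurableSet B ∧ nonHomSet false true ⊆ B ∧ nonHomSet true false ⊆ Bᶜ := by
  rintro ⟨B, hB, hB₀, hB₁⟩
  obtain ⟨y, hy⟩ := exists_hasBranch_codedTree_iff (B := fun b => if b then B else Bᶜ)
    fun b => by cases b <;> simp [hB.analyticSet, hB.compl.analyticSet]
  have key : ∀ b, y ∈ (if b then B else Bᶜ) → y ∈ nonHomSet b !b := fun b hb =>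
    ⟨fun f => by
      have := (hy y !b).1 (hasBranch_of_relHom f ((hy y b).2 hb))
      cases b <;> simp_all⟩
  by_cases hyB : y ∈ B
  · exact hB₁ (key true hyB) hyB
  · exact hyB (hB₀ (key false hyB))

theorem exists_coanalytic_borelInseparable :
    ∃ A₀ A₁ : Set (ℕ → ℕ), AnalyticSet A₀ᶜ ∧ AnalyticSet A₁ᶜ ∧ Disjoint A₀ A₁ ∧
      ¬∃ B, MeasurableSet B ∧ A₀ ⊆ B ∧ A₁ ⊆ Bᶜ :=
  ⟨_, _, analyticSet_compl_nonHomSet false true, analyticSet_compl_nonHomSet true false,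
    disjoint_nonHomSet false true, not_measurablySeparable_nonHomSet⟩

end BorelInseparable

/-- In any uncountable standard Borel (Polish) space there exist disjoint
co-analytic sets `A₀, A₁` that are Borel-inseparable: no Borel set contains
`A₀` and is disjoint from `A₁`. -/
theorem stmt9 (X : Type) [TopologicalSpace X] [PolishSpace X]
    [MeasurableSpace X] [BorelSpace X] (hX : ¬Countable X) :
    ∃ A₀ A₁ : Set X, AnalyticSet A₀ᶜ ∧ AnalyticSet A₁ᶜ ∧ Disjoint A₀ A₁ ∧
      ¬∃ B : Set X, MeasurableSet B ∧ A₀ ⊆ B ∧ A₁ ⊆ Bᶜ := by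
  obtain ⟨A₀, A₁, hA₀, hA₁, hdisj, hinsep⟩ := BorelInseparable.exists_coanalytic_borelInseparable
  have hbaire : ¬Countable (ℕ → ℕ) :=
    not_countable_iff.2 (Cardinal.aleph0_lt_mk_iff.1 (by simp [Cardinal.aleph0_lt_continuum]))
  let e : (ℕ → ℕ) ≃ᵐ X := PolishSpace.measurableEquivOfNotCountable hbaire hX
  refine ⟨e '' A₀, e '' A₁, ?_, ?_, (disjoint_image_iff e.injective).2 hdisj, ?_⟩
  · rw [← image_compl_eq e.bijective]
    exact hA₀.image_of_measurable e.measurable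
  · rw [← image_compl_eq e.bijective]
    exact hA₁.image_of_measurable e.measurable
  · rintro ⟨B, hB, hB₀, hB₁⟩
    exact hinsep ⟨e ⁻¹' B, e.measurable hB, image_subset_iff.1 hB₀, image_subset_iff.1 hB₁⟩
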